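/- The function g : ℝ → ℝ defined by g(x) = ∫₀ˣ χ_K(t) dt, where χ_K is the characteristic function of a fat (positive-measure) Cantor set K ⊆ (0,1), is Lipschitz continuous with constant 1, monotone nondecreasing, and is not semialgebraic (its graph is not a semialgebraic subset of ℝ²). -/

import Mathlib

open Set MeasureTheory

/-- A basic semialgebraic subset of `ℝⁿ`: solutions of one polynomial equality
and finitely many strict polynomial inequalities. -/
def IsBasicSemialgebraic (n : ℕ) (s : Set (Fin n → ℝ)) : Prop :=
  ∃ (p : MvPolynomial (Fin n) ℝ) (Q : Finset (MvPolynomial (Fin n) ℝ)),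
    s = {x | MvPolynomial.eval x p = 0 ∧ ∀ q ∈ Q, 0 < MvPolynomial.eval x q}

/-- A semialgebraic subset of `ℝⁿ`: a finite union of basic semialgebraic sets. -/
def IsSemialgebraic (n : ℕ) (s : Set (Fin n → ℝ)) : Prop :=
  ∃ (k : ℕ) (F : Fin k → Set (Fin n → ℝ)),
    (∀ i, IsBasicSemialgebraic n (F i)) ∧ s = ⋃ i, F i

/-- `x ↦ ∫₀ˣ χ_K(t) dt`. -/
noncomputable def cantorIntegral (K : Set ℝ) (x : ℝ) : ℝ :=
  ∫ t in (0:ℝ)..x, Set.indicator K (fun _ => (1:ℝ)) t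

/-!
If the graph of `g` were semialgebraic, then, having empty interior, it would lie in the zero set
of a nonzero polynomial `P(x, y)`, and for all but finitely many `y` the zero set of `P(·, y)`
is finite. Off the closed set `K` the function `g` is locally constant, so its values there lie in
this finite set of "flat" values; since `Kᶜ` is dense and `g` continuous, so do all its values.
A continuous function on `ℝ` with finite range is constant, which forces `volume K = 0`.
-/

open Topology

namespace MvPolynomial

variable {R : Type*} [CommRing R] [IsDomain R]

theorem eval_eq_zero_of_infinite_setOf_eval_eq_zero {P : MvPolynomial (Fin 2) R} {y : R}
    (hy : {x | eval ![x, y] P = 0}.Infinite) (x : R) : eval ![x, y] P = 0 := by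
  have h : (finSuccEquiv R 1 P).map (eval ![y]) = 0 :=
    Polynomial.eq_zero_of_infinite_isRoot _ <| hy.mono fun x hx => by
      rwa [mem_ofPred_eq, Polynomial.IsRoot.def, ← eval_eq_eval_mv_eval']
  simpa [h] using eval_eq_eval_mv_eval' ![y] x P

theorem finite_setOf_infinite_setOf_eval_eq_zero [Infinite R] {P : MvPolynomial (Fin 2) R}
    (hP : P ≠ 0) : {y | {x | eval ![x, y] P = 0}.Infinite}.Finite := by
  by_contra hY
  obtain ⟨S₁, hS₁Y, hS₁⟩ := Set.Infinite.exists_subset_card_eq hY (P.degreeOf 1 + 1)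
  obtain ⟨S₀, -, hS₀⟩ := (infinite_univ (α := R)).exists_subset_card_eq (P.degreeOf 0 + 1)
  refine hP (eq_zero_of_eval_zero_at_prod_finset P ![S₀, S₁] (fun i => ?_) fun v hv => ?_)
  · fin_cases i <;> simp [hS₀, hS₁]
  · have := eval_eq_zero_of_infinite_setOf_eval_eq_zero (hS₁Y (hv 1)) (v 0)
    rwa [show ![v 0, v 1] = v by ext i; fin_cases i <;> rfl] at this

theorem isOpen_setOf_forall_eval_pos {n : ℕ} (Q : Finset (MvPolynomial (Fin n) ℝ)) :
    IsOpen {x : Fin n → ℝ | ∀ q ∈ Q, 0 < eval x q} := by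
  simpa only [ofPred_forall] using
    isOpen_biInter_finset fun q _ => isOpen_lt continuous_const (continuous_eval q)

end MvPolynomial

theorem IsSemialgebraic.exists_ne_zero_of_interior_eq_empty {n : ℕ} {s : Set (Fin n → ℝ)}
    (hs : IsSemialgebraic n s) (hint : interior s = ∅) :
    ∃ P : MvPolynomial (Fin n) ℝ, P ≠ 0 ∧ ∀ x ∈ s, MvPolynomial.eval x P = 0 := by
  classical
  obtain ⟨k, F, hF, rfl⟩ := hs
  choose p Q hpQ using hF
  have hp : ∀ i, ∀ x ∈ F i, p i ≠ 0 := by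
    intro i x hx hpi
    have hopen : IsOpen (F i) := by
      simpa [hpQ i, hpi] using MvPolynomial.isOpen_setOf_forall_eval_pos (Q i)
    have := interior_maximal (subset_iUnion F i) hopen
    rw [hint] at this
    exact this hx
  refine ⟨∏ i, if p i = 0 then 1 else p i, Finset.prod_ne_zero_iff.mpr fun i _ => ?_, ?_⟩
  · split_ifs with h
    exacts [one_ne_zero, h]
  · rintro x hx
    obtain ⟨i, hi⟩ := mem_iUnion.mp hx
    rw [map_prod]
    refine Finset.prod_eq_zero (Finset.mem_univ i) ?_
    rw [if_neg (hp i x hi)]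
    rw [hpQ i] at hi
    exact hi.1

theorem interior_setOf_eq_apply_eq_empty (g : ℝ → ℝ) :
    interior {x : Fin 2 → ℝ | x 1 = g (x 0)} = ∅ := by
  refine eq_empty_of_forall_notMem fun v hv => ?_
  have hcurve : Continuous fun t : ℝ => Function.update v 1 (v 1 + t) := by fun_prop
  have hnear : ∀ᶠ t in 𝓝[≠] (0 : ℝ), Function.update v 1 (v 1 + t) ∈ interior _ :=
    ((hcurve.tendsto' 0 v (by simp)).mono_left nhdsWithin_le_nhds).eventually
      (isOpen_interior.mem_nhds hv)
  obtain ⟨t, ht, ht0⟩ := (hnear.and self_mem_nhdsWithin).exists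
  have h₀ : v 1 = g (v 0) := (interior_subset hv :)
  have h₁ : v 1 + t = g (v 0) := by simpa using interior_subset ht
  exact ht0 (by simp only [mem_singleton_iff]; linarith)

theorem Continuous.eq_of_finite_range {X α : Type*} [TopologicalSpace X] [PreconnectedSpace X]
    [LinearOrder α] [TopologicalSpace α] [OrderClosedTopology α] [DenselyOrdered α]
    {f : X → α} (hf : Continuous f) (hfin : (range f).Finite) (a b : X) : f a = f b := by
  wlog hab : f a ≤ f b generalizing a b
  · exact (this b a (le_of_not_ge hab)).symm
  by_contra hne
  exact (Icc_infinite (hab.lt_of_ne hne)).mono (intermediate_value_univ a b hf) hfin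

section cantorIntegral

variable {K : Set ℝ}

theorem intervalIntegrable_indicator_one (hK : MeasurableSet K) (a b : ℝ) :
    IntervalIntegrable (K.indicator fun _ => (1 : ℝ)) volume a b :=
  ((integrableOn_const measure_Icc_lt_top.ne).indicator hK).intervalIntegrable

theorem cantorIntegral_sub_cantorIntegral (hK : MeasurableSet K) (a b : ℝ) :
    cantorIntegral K b - cantorIntegral K a = ∫ t in a..b, K.indicator (fun _ => (1 : ℝ)) t :=
  intervalIntegral.integral_interval_sub_left (intervalIntegrable_indicator_one hK _ _)
    (intervalIntegrable_indicator_one hK _ _)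

theorem lipschitzWith_cantorIntegral (hK : MeasurableSet K) : LipschitzWith 1 (cantorIntegral K) :=
  LipschitzWith.of_dist_le_mul fun a b => by
    rw [dist_eq_norm, Real.dist_eq, cantorIntegral_sub_cantorIntegral hK b a, NNReal.coe_one]
    exact intervalIntegral.norm_integral_le_of_norm_le_const fun t _ =>
      norm_indicator_le_norm_self _ _ |>.trans_eq norm_one

theorem monotone_cantorIntegral (hK : MeasurableSet K) : Monotone (cantorIntegral K) :=
  fun a b hab => sub_nonneg.mp <| cantorIntegral_sub_cantorIntegral hK a b ▸
    intervalIntegral.integral_nonneg hab fun _ _ => indicator_nonneg (fun _ _ => zero_le_one) _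

theorem cantorIntegral_sub_eq_measureReal (hK : MeasurableSet K) {a b : ℝ} (hab : a ≤ b) :
    cantorIntegral K b - cantorIntegral K a = volume.real (K ∩ Ioc a b) := by
  rw [cantorIntegral_sub_cantorIntegral hK, intervalIntegral.integral_of_le hab,
    integral_indicator_const _ hK, measureReal_restrict_apply hK, smul_eq_mul, mul_one]

theorem cantorIntegral_eq_of_disjoint_uIcc (hK : MeasurableSet K) {a b : ℝ}
    (h : Disjoint (uIcc a b) K) : cantorIntegral K a = cantorIntegral K b := by
  rw [← sub_eq_zero, ← neg_sub, cantorIntegral_sub_cantorIntegral hK, neg_eq_zero]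
  exact intervalIntegral.integral_zero_ae <| .of_forall fun t ht =>
    indicator_of_notMem (h.notMem_of_mem_left (uIoc_subset_uIcc ht)) _

theorem eventually_cantorIntegral_eq (hK : IsClosed K) {x : ℝ} (hx : x ∉ K) :
    ∀ᶠ u in 𝓝 x, cantorIntegral K u = cantorIntegral K x := by
  obtain ⟨l, r, hxlr, hlr⟩ := mem_nhds_iff_exists_Ioo_subset.mp (hK.isOpen_compl.mem_nhds hx)
  filter_upwards [isOpen_Ioo.mem_nhds hxlr] with u hu
  exact cantorIntegral_eq_of_disjoint_uIcc hK.measurableSet <|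
    subset_compl_iff_disjoint_right.mp ((ordConnected_Ioo.uIcc_subset hu hxlr).trans hlr)

theorem volume_eq_zero_of_cantorIntegral_eq (hK : MeasurableSet K)
    (h : ∀ a b, cantorIntegral K a = cantorIntegral K b) : volume K = 0 := by
  have hcover : K = ⋃ n : ℤ, K ∩ Ioc (n : ℝ) (n + 1) := by
    rw [← inter_iUnion, iUnion_Ioc_intCast, inter_univ]
  refine hcover ▸ measure_iUnion_null fun n => ?_
  have hfin : volume (K ∩ Ioc (n : ℝ) (n + 1)) ≠ ⊤ :=
    ((measure_mono inter_subset_right).trans_lt measure_Ioc_lt_top).ne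
  rw [← measureReal_eq_zero_iff hfin, ← cantorIntegral_sub_eq_measureReal hK (by linarith), h,
    sub_self]

end cantorIntegral

theorem cantorIntegral_lipschitz_monotone_not_semialgebraic_general (K : Set ℝ)
    (hKcl : IsClosed K) (hKint : interior K = ∅)
    (hKpos : 0 < volume K) :
    LipschitzWith 1 (cantorIntegral K) ∧ Monotone (cantorIntegral K) ∧
      ¬ IsSemialgebraic 2 {x : Fin 2 → ℝ | x 1 = cantorIntegral K (x 0)} := by
  have hKm := hKcl.measurableSet
  refine ⟨lipschitzWith_cantorIntegral hKm, monotone_cantorIntegral hKm, fun hS => ?_⟩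
  set g := cantorIntegral K
  have hg : Continuous g := (lipschitzWith_cantorIntegral hKm).continuous
  obtain ⟨P, hP, hPg⟩ :=
    hS.exists_ne_zero_of_interior_eq_empty (interior_setOf_eq_apply_eq_empty g)
  set flat := {y | (g ⁻¹' {y}).Infinite}
  have hflat : flat.Finite := (MvPolynomial.finite_setOf_infinite_setOf_eval_eq_zero hP).subset
    fun y hy => hy.mono fun x hx => hPg ![x, y] (by simpa using hx.symm)
  have hKc : Kᶜ ⊆ g ⁻¹' flat := fun x hx =>
    infinite_of_mem_nhds x (eventually_cantorIntegral_eq hKcl hx)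
  have hrange : range g ⊆ flat := by
    rintro _ ⟨x, rfl⟩
    have := closure_minimal hKc (hflat.isClosed.preimage hg)
    rw [(interior_eq_empty_iff_dense_compl.mp hKint).closure_eq] at this
    exact this (mem_univ x)
  exact hKpos.ne' <|
    volume_eq_zero_of_cantorIntegral_eq hKm (hg.eq_of_finite_range (hflat.subset hrange))

theorem cantorIntegral_lipschitz_monotone_not_semialgebraic (K : Set ℝ)
    (hKsub : K ⊆ Set.Ioo 0 1) (hKcl : IsClosed K) (hKint : interior K = ∅)
    (hKpos : 0 < volume K) :
    LipschitzWith 1 (cantorIntegral K) ∧ Monotone (cantorIntegral K) ∧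
      ¬ IsSemialgebraic 2 {x : Fin 2 → ℝ | x 1 = cantorIntegral K (x 0)} :=
  cantorIntegral_lipschitz_monotone_not_semialgebraic_general K hKcl hKint hKpos
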